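/- Let k, l ≥ 1 and r ≥ 0 be integers, and let f, g : ℍ → ℂ be holomorphic. Then [f,g]_r = Σ_{s=0}^r (−1)^s · C(k+r−1, s) · C(l+r−1, r−s) · R_k^{r−s}(f) · R_l^s(g), where C(a,s) denotes the binomial coefficient. -/

import Mathlib

noncomputable section

open Complex Real

/-- The upper half-plane, as a subset of `ℂ`. -/
def UHP : Set ℂ := {z : ℂ | 0 < z.im}

/-- `e(z) = exp(2πiz)`. -/
def e (z : ℂ) : ℂ := Complex.exp (2 * (π : ℂ) * I * z)

/-- The Wirtinger derivative `∂f/∂τ = (1/2)(∂f/∂x − i ∂f/∂y)`. -/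
def dtau (f : ℂ → ℂ) (z : ℂ) : ℂ := (fderiv ℝ f z 1 - I * fderiv ℝ f z I) / 2

/-- The raising operator `R_w f = (1/(2πi)) (∂f/∂τ + w f/(τ − τ̄))`. -/
def Rop (w : ℤ) (f : ℂ → ℂ) : ℂ → ℂ :=
  fun z => (1 / (2 * (π : ℂ) * I)) * (dtau f z + (w : ℂ) * f z / (z - (starRingEnd ℂ) z))

/-- Iterated raising operator: `R_w^0 = id`, `R_w^{n+1} = R_{w+2n} ∘ R_w^n`. -/
def Riter (w : ℤ) : ℕ → (ℂ → ℂ) → (ℂ → ℂ)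
  | 0 => fun f => f
  | n + 1 => fun f => Rop (w + 2 * n) (Riter w n f)

/-- Normalized derivative `f^{(r)} = (2πi)^{−r} d^r f/dτ^r`. -/
def fder (r : ℕ) (f : ℂ → ℂ) : ℂ → ℂ :=
  fun z => ((2 * (π : ℂ) * I) ^ r)⁻¹ * iteratedDeriv r f z

/-- The Rankin–Cohen bracket of `f` and `g` with weight parameters `k`, `l`:
`[f,g]_r = Σ_{s=0}^r (−1)^s C(k+r−1,s) C(l+r−1,r−s) f^{(r−s)} g^{(s)}`. -/
def RCbracket (k l r : ℕ) (f g : ℂ → ℂ) : ℂ → ℂ :=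
  fun z => ∑ s ∈ Finset.range (r + 1),
    (-1 : ℂ) ^ s * (Nat.choose (k + r - 1) s : ℂ) * (Nat.choose (l + r - 1) (r - s) : ℂ) *
      fder (r - s) f z * fder s g z

/-!
On holomorphic functions the raising operator is `R_w = D + w V`, where `D = (2πi)⁻¹ d/dτ` and
`V = raisingFactor = 1/(2πi(τ - τ̄))` satisfies `D V = -V²`. Induction on `n` then gives
`R_w^n f = Σ_j C(n,j) (w+j)^{(n-j)} V^{n-j} f^{(j)}`, with `(x)^{(m)}` the rising factorial.
Substituting this into the right-hand side, the coefficient of `V^n f^{(a)} g^{(b)}`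
(`a + b + n = r`) is, by factorial bookkeeping, a constant multiple of `Σ_t (-1)^t C(n,t)`,
which vanishes unless `n = 0`; the terms with `n = 0` are exactly the Rankin–Cohen bracket.
-/

open Filter Topology ComplexConjugate Finset
open scoped Nat

lemma isOpen_UHP : IsOpen UHP := isOpen_lt continuous_const continuous_im

lemma sub_conj_ne_zero_of_mem_UHP {z : ℂ} (hz : z ∈ UHP) : z - conj z ≠ 0 := by
  rw [sub_conj]
  exact mul_ne_zero (by exact_mod_cast (mul_pos two_pos hz).ne') I_ne_zero

section Wirtinger

variable {f g : ℂ → ℂ} {z : ℂ}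

lemma dtau_congr_of_eventuallyEq (h : f =ᶠ[𝓝 z] g) : dtau f z = dtau g z := by
  simp only [dtau, h.fderiv_eq]

lemma dtau_const_mul (c : ℂ) (hf : DifferentiableAt ℝ f z) :
    dtau (fun x => c * f x) z = c * dtau f z := by
  simp only [dtau, fderiv_const_mul hf c, smul_apply, smul_eq_mul]
  ring

lemma dtau_mul (hf : DifferentiableAt ℝ f z) (hg : DifferentiableAt ℝ g z) :
    dtau (fun x => f x * g x) z = dtau f z * g z + f z * dtau g z := by
  simp only [dtau, fderiv_fun_mul hf hg, add_apply, smul_apply, smul_eq_mul]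
  ring

lemma dtau_sum {ι : Type*} (u : Finset ι) {F : ι → ℂ → ℂ}
    (hF : ∀ i ∈ u, DifferentiableAt ℝ (F i) z) :
    dtau (fun x => ∑ i ∈ u, F i x) z = ∑ i ∈ u, dtau (F i) z := by
  simp only [dtau, fderiv_fun_sum hF, _root_.sum_apply, Finset.mul_sum,
    ← Finset.sum_sub_distrib, Finset.sum_div]

lemma dtau_comp {h : ℂ → ℂ} (hh : DifferentiableAt ℂ h (g z)) (hg : DifferentiableAt ℝ g z) :
    dtau (fun x => h (g x)) z = deriv h (g z) * dtau g z := by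
  have : HasFDerivAt (fun x => h (g x)) _ z :=
    (hh.hasDerivAt.hasFDerivAt.restrictScalars ℝ).comp z hg.hasFDerivAt
  simp [dtau, this.fderiv]
  ring

lemma dtau_id : dtau (fun x => x) z = 1 := by
  simp [dtau]

lemma dtau_eq_deriv (hf : DifferentiableAt ℂ f z) : dtau f z = deriv f z := by
  simpa [dtau_id] using dtau_comp (g := fun x => x) hf differentiableAt_id

lemma hasFDerivAt_sub_conj :
    HasFDerivAt (fun x : ℂ => x - conj x)
      (ContinuousLinearMap.id ℝ ℂ - (conjCLE : ℂ →L[ℝ] ℂ)) z :=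
  (hasFDerivAt_id z).sub conjCLE.hasFDerivAt

lemma dtau_sub_conj : dtau (fun x => x - conj x) z = 1 := by
  simp [dtau, hasFDerivAt_sub_conj.fderiv, ← two_mul]
  linear_combination -I_mul_I

end Wirtinger

def raisingFactor (z : ℂ) : ℂ := (2 * π * I * (z - conj z))⁻¹

lemma Rop_apply (w : ℤ) (f : ℂ → ℂ) (z : ℂ) :
    Rop w f z = (2 * π * I)⁻¹ * dtau f z + w * raisingFactor z * f z := by
  simp only [Rop, raisingFactor, mul_inv]
  ring

section raisingFactor

variable {z : ℂ}

lemma differentiableAt_two_pi_I_mul_sub_conj :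
    DifferentiableAt ℝ (fun x : ℂ => 2 * π * I * (x - conj x)) z :=
  hasFDerivAt_sub_conj.differentiableAt.const_mul _

lemma two_pi_I_mul_sub_conj_ne_zero (hz : z ∈ UHP) : 2 * π * I * (z - conj z) ≠ 0 :=
  mul_ne_zero two_pi_I_ne_zero (sub_conj_ne_zero_of_mem_UHP hz)

lemma differentiableAt_raisingFactor (hz : z ∈ UHP) : DifferentiableAt ℝ raisingFactor z :=
  ((differentiableAt_inv (𝕜 := ℂ) (two_pi_I_mul_sub_conj_ne_zero hz)).restrictScalars ℝ).comp z
    differentiableAt_two_pi_I_mul_sub_conj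

lemma dtau_raisingFactor (hz : z ∈ UHP) :
    dtau raisingFactor z = -(2 * π * I) * raisingFactor z ^ 2 := by
  have := dtau_comp (g := fun x : ℂ => 2 * π * I * (x - conj x))
    (differentiableAt_inv (𝕜 := ℂ) (two_pi_I_mul_sub_conj_ne_zero hz))
    differentiableAt_two_pi_I_mul_sub_conj
  rw [dtau_const_mul _ hasFDerivAt_sub_conj.differentiableAt, dtau_sub_conj, deriv_inv] at this
  unfold raisingFactor
  rw [this, inv_pow]
  ring

lemma dtau_raisingFactor_pow (hz : z ∈ UHP) (m : ℕ) :
    dtau (fun x => raisingFactor x ^ m) z = -(2 * π * I) * m * raisingFactor z ^ (m + 1) := by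
  rw [dtau_comp (h := fun y => y ^ m) (differentiableAt_pow m) (differentiableAt_raisingFactor hz),
    dtau_raisingFactor hz, deriv_pow_field]
  rcases m with _ | m
  · simp
  · push_cast
    ring

end raisingFactor

section holomorphic

variable {f : ℂ → ℂ} {z : ℂ}

lemma differentiableAt_iteratedDeriv (hf : DifferentiableOn ℂ f UHP) (hz : z ∈ UHP) (j : ℕ) :
    DifferentiableAt ℂ (iteratedDeriv j f) z := by
  rw [iteratedDeriv_eq_iterate]
  exact ((hf.analyticOnNhd isOpen_UHP).iterated_deriv j z hz).differentiableAt

lemma differentiableAt_fder (hf : DifferentiableOn ℂ f UHP) (hz : z ∈ UHP) (j : ℕ) :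
    DifferentiableAt ℂ (fder j f) z :=
  (differentiableAt_iteratedDeriv hf hz j).const_mul _

lemma dtau_fder (hf : DifferentiableOn ℂ f UHP) (hz : z ∈ UHP) (j : ℕ) :
    dtau (fder j f) z = 2 * π * I * fder (j + 1) f z := by
  rw [dtau_eq_deriv (differentiableAt_fder hf hz j)]
  unfold fder
  rw [deriv_const_mul _ (differentiableAt_iteratedDeriv hf hz j), iteratedDeriv_succ]
  field_simp [two_pi_I_ne_zero]
  ring

lemma dtau_monomial (hf : DifferentiableOn ℂ f UHP) (hz : z ∈ UHP) (c : ℂ) (m j : ℕ) :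
    (2 * π * I)⁻¹ * dtau (fun x => c * raisingFactor x ^ m * fder j f x) z
      = c * (-m * raisingFactor z ^ (m + 1) * fder j f z
          + raisingFactor z ^ m * fder (j + 1) f z) := by
  have hpow := (differentiableAt_raisingFactor hz).fun_pow m
  have hfder := (differentiableAt_fder hf hz j).restrictScalars ℝ
  simp only [mul_assoc c]
  rw [dtau_const_mul _ (hpow.fun_mul hfder), dtau_mul hpow hfder, dtau_raisingFactor_pow hz,
    dtau_fder hf hz]
  field_simp [two_pi_I_ne_zero]

end holomorphic

def raisingCoeff {R : Type*} [CommRing R] (w : R) (n j : ℕ) : R :=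
  n.choose j * (ascPochhammer R (n - j)).eval (w + j)

section raisingCoeff

variable {R : Type*} [CommRing R] (w : R)

lemma raisingCoeff_of_lt {n j : ℕ} (h : n < j) : raisingCoeff w n j = 0 := by
  simp [raisingCoeff, Nat.choose_eq_zero_of_lt h]

@[simp] lemma raisingCoeff_self (n : ℕ) : raisingCoeff w n n = 1 := by
  simp [raisingCoeff]

lemma raisingCoeff_succ_zero (n : ℕ) :
    raisingCoeff w (n + 1) 0 = (w + n) * raisingCoeff w n 0 := by
  simp [raisingCoeff, ascPochhammer_succ_eval, mul_comm]

lemma raisingCoeff_succ_succ (n j : ℕ) :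
    raisingCoeff w (n + 1) (j + 1)
      = (w + n + j + 1) * raisingCoeff w n (j + 1) + raisingCoeff w n j := by
  rcases lt_trichotomy j n with hjn | rfl | hnj
  · obtain ⟨m, rfl⟩ := Nat.exists_eq_add_of_lt hjn
    have hpascal : ((j + m + 1 + 1).choose (j + 1) : R)
        = (j + m + 1).choose j + (j + m + 1).choose (j + 1) := by
      rw [Nat.choose_succ_succ]; push_cast; ring
    have hsymm : ((j + m + 1).choose (j + 1) * (j + 1) : R) = (j + m + 1).choose j * (m + 1) := by
      have := Nat.choose_succ_right_eq (j + m + 1) j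
      rw [show j + m + 1 - j = m + 1 by omega] at this
      exact_mod_cast congrArg (Nat.cast : ℕ → R) this
    have hright : (ascPochhammer R (m + 1)).eval (w + j + 1)
        = (ascPochhammer R m).eval (w + j + 1) * (w + j + 1 + m) :=
      ascPochhammer_succ_eval m _
    have hleft : (ascPochhammer R (m + 1)).eval (w + j)
        = (w + j) * (ascPochhammer R m).eval (w + j + 1) := by
      simp [ascPochhammer_succ_left, add_assoc]
    simp only [raisingCoeff, show j + m + 1 + 1 - (j + 1) = m + 1 by omega,
      show j + m + 1 - (j + 1) = m by omega, show j + m + 1 - j = m + 1 by omega]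
    push_cast
    rw [← add_assoc, hright, hleft]
    linear_combination (ascPochhammer R m).eval (w + j + 1) * ((w + j + m + 1) * hpascal - hsymm)
  · simp [raisingCoeff_of_lt w (Nat.lt_succ_self j)]
  · simp [raisingCoeff_of_lt w hnj, raisingCoeff_of_lt w (Nat.lt_succ_of_lt hnj),
      raisingCoeff_of_lt w (Nat.succ_lt_succ hnj)]

lemma sum_raisingCoeff_succ (v : R) (F : ℕ → R) (n : ℕ) :
    ∑ j ∈ range (n + 1 + 1), raisingCoeff w (n + 1) j * v ^ (n + 1 - j) * F j
      = ∑ j ∈ range (n + 1), raisingCoeff w n j *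
          ((w + n + j) * v ^ (n + 1 - j) * F j + v ^ (n - j) * F (j + 1)) := by
  set g := fun j : ℕ => raisingCoeff w n j * ((w + n + j) * v ^ (n + 1 - j) * F j)
  have hg : ∑ j ∈ range (n + 1), g j = ∑ j ∈ range (n + 1), g (j + 1) + g 0 := by
    rw [← sum_range_succ', sum_range_succ g (n + 1), left_eq_add]
    simp [g, raisingCoeff_of_lt w (Nat.lt_succ_self n)]
  calc ∑ j ∈ range (n + 1 + 1), raisingCoeff w (n + 1) j * v ^ (n + 1 - j) * F j
      = ∑ j ∈ range (n + 1), raisingCoeff w (n + 1) (j + 1) * v ^ (n + 1 - (j + 1)) * F (j + 1)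
          + raisingCoeff w (n + 1) 0 * v ^ (n + 1 - 0) * F 0 := sum_range_succ' _ _
    _ = ∑ j ∈ range (n + 1), (g (j + 1) + raisingCoeff w n j * (v ^ (n - j) * F (j + 1)))
          + g 0 := by
      congr 1
      · refine sum_congr rfl fun j _ => ?_
        simp only [g, raisingCoeff_succ_succ, Nat.add_sub_add_right]
        push_cast
        ring
      · simp only [g, raisingCoeff_succ_zero]
        push_cast
        ring
    _ = _ := by
      rw [sum_add_distrib, add_right_comm, ← hg, ← sum_add_distrib]
      simp only [g, mul_add]

lemma raisingCoeff_natCast (k n j : ℕ) :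
    raisingCoeff (k : R) n j = ((n.choose j * (k + j).ascFactorial (n - j) : ℕ) : R) := by
  rw [raisingCoeff, ← Nat.cast_add, ascPochhammer_nat_eq_natCast_ascFactorial]
  push_cast
  rfl

end raisingCoeff

lemma Riter_apply_eq_sum (w : ℤ) {f : ℂ → ℂ} (hf : DifferentiableOn ℂ f UHP) (n : ℕ) {z : ℂ}
    (hz : z ∈ UHP) :
    Riter w n f z = ∑ j ∈ range (n + 1),
      raisingCoeff (w : ℂ) n j * raisingFactor z ^ (n - j) * fder j f z := by
  induction n generalizing z with
  | zero => simp [Riter, raisingCoeff, fder]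
  | succ n ih =>
    have hterm : ∀ j ∈ range (n + 1), DifferentiableAt ℝ
        (fun x => raisingCoeff (w : ℂ) n j * raisingFactor x ^ (n - j) * fder j f x) z :=
      fun j _ => (((differentiableAt_raisingFactor hz).pow _).const_mul _).mul
        ((differentiableAt_fder hf hz j).restrictScalars ℝ)
    have hdtau : (2 * π * I)⁻¹ * dtau (Riter w n f) z = ∑ j ∈ range (n + 1),
        raisingCoeff (w : ℂ) n j * (-(n - j : ℕ) * raisingFactor z ^ (n - j + 1) * fder j f z
          + raisingFactor z ^ (n - j) * fder (j + 1) f z) := by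
      rw [dtau_congr_of_eventuallyEq (eventually_of_mem (isOpen_UHP.mem_nhds hz) fun x hx => ih hx),
        dtau_sum _ hterm, mul_sum]
      exact sum_congr rfl fun j _ => dtau_monomial hf hz _ _ _
    rw [show Riter w (n + 1) f z = Rop (w + 2 * n) (Riter w n f) z from rfl, Rop_apply, hdtau,
      ih hz, sum_raisingCoeff_succ, mul_sum, ← sum_add_distrib]
    refine sum_congr rfl fun j hj => ?_
    obtain ⟨m, rfl⟩ := Nat.exists_eq_add_of_le (mem_range_succ_iff.mp hj)
    simp only [Nat.add_sub_cancel_left, show j + m + 1 - j = m + 1 by omega]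
    push_cast
    ring

lemma Riter_apply_eq_sum_range_of_lt (w : ℤ) {f : ℂ → ℂ} (hf : DifferentiableOn ℂ f UHP)
    {n N : ℕ} (hN : n < N) {z : ℂ} (hz : z ∈ UHP) :
    Riter w n f z = ∑ j ∈ range N,
      raisingCoeff (w : ℂ) n j * raisingFactor z ^ (n - j) * fder j f z := by
  rw [Riter_apply_eq_sum w hf n hz]
  refine sum_subset (range_subset_range.mpr hN) fun j _ hj => ?_
  rw [raisingCoeff_of_lt _ (by simpa using hj), zero_mul, zero_mul]

lemma choose_mul_ascFactorial_mul_choose_mul_factorial (p q m b : ℕ) (hb : b ≤ q) :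
    (p + q + m).choose q * (p + 1).ascFactorial m * q.choose b * (b ! * (q - b)! * p !)
      = (p + q + m)! := by
  have hq := Nat.choose_mul_factorial_mul_factorial hb
  have hp := Nat.factorial_mul_ascFactorial p m
  have hN := Nat.choose_mul_factorial_mul_factorial (show q ≤ p + q + m by omega)
  rw [show p + q + m - q = p + m by omega] at hN
  calc (p + q + m).choose q * (p + 1).ascFactorial m * q.choose b * (b ! * (q - b)! * p !)
      = (p + q + m).choose q * (q.choose b * b ! * (q - b)!) * (p ! * (p + 1).ascFactorial m) := by
        ring
    _ = (p + q + m)! := by rw [hq, hp, hN]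

lemma alternating_sum_choose_mul_ascFactorial_eq_zero (k l a b n : ℕ) (hn : n ≠ 0) :
    ∑ t ∈ range (n + 1), (-1 : ℤ) ^ t *
      (((k + a + b + n).choose (b + t) * (k + a + 1).ascFactorial (n - t) * (b + t).choose b) *
        ((l + a + b + n).choose (a + (n - t)) * (l + b + 1).ascFactorial t *
          (a + (n - t)).choose a) : ℕ) = 0 := by
  set Y := n ! * (b ! * (k + a)!) * (a ! * (l + b)!)
  have key : ∀ t ∈ range (n + 1),
      ((k + a + b + n).choose (b + t) * (k + a + 1).ascFactorial (n - t) * (b + t).choose b) *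
        ((l + a + b + n).choose (a + (n - t)) * (l + b + 1).ascFactorial t *
          (a + (n - t)).choose a) * Y
        = (k + a + b + n)! * (l + a + b + n)! * n.choose t := by
    intro t ht
    obtain ⟨m, rfl⟩ := Nat.exists_eq_add_of_le (mem_range_succ_iff.mp ht)
    have hP := choose_mul_ascFactorial_mul_choose_mul_factorial (k + a) (b + t) m b (by omega)
    have hQ := choose_mul_ascFactorial_mul_choose_mul_factorial (l + b) (a + m) t a (by omega)
    have hC := Nat.choose_mul_factorial_mul_factorial (Nat.le_add_right t m)
    simp only [Nat.add_sub_cancel_left] at hP hQ hC ⊢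
    rw [show k + a + (b + t) + m = k + a + b + (t + m) by omega] at hP
    rw [show l + b + (a + m) + t = l + a + b + (t + m) by omega] at hQ
    rw [← hP, ← hQ]
    simp only [Y]
    rw [← hC]
    ring
  have hY : (Y : ℤ) ≠ 0 := by positivity
  refine mul_right_cancel₀ hY ?_
  rw [zero_mul, sum_mul]
  calc _ = ∑ t ∈ range (n + 1),
        ((k + a + b + n)! * (l + a + b + n)! : ℤ) * ((-1) ^ t * n.choose t) :=
        sum_congr rfl fun t ht => by
          rw [mul_assoc, ← Nat.cast_mul, key t ht]
          push_cast
          ring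
    _ = 0 := by rw [← mul_sum, Int.alternating_sum_range_choose_of_ne hn, mul_zero]

lemma sum_choose_mul_raisingCoeff_mul_raisingCoeff {R : Type*} [CommRing R] (k l r a b : ℕ)
    (hk : 1 ≤ k) (hl : 1 ≤ l) (v : R) :
    ∑ s ∈ range (r + 1), (-1) ^ s * ((k + r - 1).choose s : R) * ((l + r - 1).choose (r - s) : R) *
        (raisingCoeff (k : R) (r - s) a * v ^ (r - s - a)) * (raisingCoeff (l : R) s b * v ^ (s - b))
      = if a + b = r then (-1) ^ b * ((k + r - 1).choose b : R) * ((l + r - 1).choose a : R)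
        else 0 := by
  obtain ⟨k, rfl⟩ := Nat.exists_eq_add_of_le' hk
  obtain ⟨l, rfl⟩ := Nat.exists_eq_add_of_le' hl
  simp only [show ∀ x, x + 1 + r - 1 = x + r from fun x => by omega]
  set F := fun s => (-1) ^ s * ((k + r).choose s : R) * ((l + r).choose (r - s) : R) *
    (raisingCoeff ((k + 1 : ℕ) : R) (r - s) a * v ^ (r - s - a)) *
      (raisingCoeff ((l + 1 : ℕ) : R) s b * v ^ (s - b))
  by_cases hab : a + b ≤ r
  swap
  · rw [if_neg (by omega)]
    refine sum_eq_zero fun s hs => ?_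
    rcases lt_or_ge s b with hsb | hbs
    · simp [raisingCoeff_of_lt _ hsb]
    · have := mem_range_succ_iff.mp hs
      simp [raisingCoeff_of_lt _ (show r - s < a by omega)]
  obtain ⟨n, rfl⟩ := Nat.exists_eq_add_of_le hab
  have hlow : ∑ s ∈ range b, F s = 0 :=
    sum_eq_zero fun s hs => by simp [F, raisingCoeff_of_lt _ (mem_range.mp hs)]
  have hhigh : ∑ x ∈ range a, F (b + (n + 1) + x) = 0 :=
    sum_eq_zero fun x hx => by
      have := mem_range.mp hx
      simp [F, raisingCoeff_of_lt _ (show a + b + n - (b + (n + 1) + x) < a by omega)]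
  have hmiddle : ∑ s ∈ range (a + b + n + 1), F s = ∑ t ∈ range (n + 1), F (b + t) := by
    rw [show a + b + n + 1 = b + (n + 1) + a by omega, sum_range_add, sum_range_add, hlow, hhigh,
      zero_add, add_zero]
  rw [hmiddle]
  rcases eq_or_ne n 0 with rfl | hn
  · simp [F]
  rw [if_neg (by omega)]
  have hterm : ∀ t ∈ range (n + 1), F (b + t) = (-1) ^ b * v ^ n * (((-1 : ℤ) ^ t *
      (((k + a + b + n).choose (b + t) * (k + a + 1).ascFactorial (n - t) * (b + t).choose b) *
        ((l + a + b + n).choose (a + (n - t)) * (l + b + 1).ascFactorial t *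
          (a + (n - t)).choose a) : ℕ) : ℤ) : R) := by
    intro t ht
    obtain ⟨m, rfl⟩ := Nat.exists_eq_add_of_le (mem_range_succ_iff.mp ht)
    simp only [F, raisingCoeff_natCast, show a + b + (t + m) - (b + t) = a + m by omega,
      Nat.add_sub_cancel_left, show ∀ x, x + (a + b + (t + m)) = x + a + b + (t + m) from
        fun x => by omega, show ∀ x y, x + 1 + y = x + y + 1 from fun x y => by omega]
    push_cast
    ring
  rw [sum_congr rfl hterm, ← mul_sum, ← Int.cast_sum,
    alternating_sum_choose_mul_ascFactorial_eq_zero k l a b n hn, Int.cast_zero, mul_zero]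

lemma RCbracket_eq_sum_sum_ite (k l r : ℕ) (f g : ℂ → ℂ) (z : ℂ) :
    RCbracket k l r f g z = ∑ b ∈ range (r + 1), ∑ a ∈ range (r + 1),
      (if a + b = r then (-1) ^ b * ((k + r - 1).choose b : ℂ) * ((l + r - 1).choose a : ℂ)
        else 0) * (fder a f z * fder b g z) := by
  refine sum_congr rfl fun b hb => ?_
  have hbr := mem_range_succ_iff.mp hb
  rw [sum_eq_single_of_mem (r - b) (mem_range.mpr (by omega)) fun a _ ha => by
    rw [if_neg (by omega), zero_mul], if_pos (by omega)]
  ring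

lemma sum_mul_sum_mul_sum_eq_sum_sum {R ι κ μ : Type*} [CommSemiring R] (s : Finset ι)
    (t : Finset κ) (u : Finset μ) (c : ι → R) (A : ι → κ → R) (B : ι → μ → R) (F : κ → R)
    (G : μ → R) :
    ∑ i ∈ s, c i * (∑ a ∈ t, A i a * F a) * (∑ b ∈ u, B i b * G b)
      = ∑ b ∈ u, ∑ a ∈ t, (∑ i ∈ s, c i * A i a * B i b) * (F a * G b) := by
  simp only [sum_mul, mul_sum]
  conv_rhs => arg 2; ext b; rw [sum_comm]
  rw [sum_comm]
  exact sum_congr rfl fun i _ => sum_congr rfl fun a _ => sum_congr rfl fun b _ => by ring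

/-- for integers `k, l ≥ 1`, `r ≥ 0` and holomorphic `f, g` on `ℍ`,
`[f,g]_r = Σ_{s=0}^r (−1)^s C(k+r−1,s) C(l+r−1,r−s) R_k^{r−s}(f) R_l^s(g)`. -/
theorem stmt12 (k l : ℕ) (hk : 1 ≤ k) (hl : 1 ≤ l) (r : ℕ)
    (f g : ℂ → ℂ) (hf : DifferentiableOn ℂ f UHP) (hg : DifferentiableOn ℂ g UHP) :
    ∀ τ ∈ UHP,
      RCbracket k l r f g τ
        = ∑ s ∈ Finset.range (r + 1),
            (-1 : ℂ) ^ s * (Nat.choose (k + r - 1) s : ℂ) *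
              (Nat.choose (l + r - 1) (r - s) : ℂ) *
              Riter (k : ℤ) (r - s) f τ * Riter (l : ℤ) s g τ := by
  intro τ hτ
  simp only [RCbracket_eq_sum_sum_ite,
    ← sum_choose_mul_raisingCoeff_mul_raisingCoeff k l r _ _ hk hl (raisingFactor τ)]
  rw [← sum_mul_sum_mul_sum_eq_sum_sum]
  refine sum_congr rfl fun s hs => ?_
  rw [Riter_apply_eq_sum_range_of_lt _ hf (N := r + 1) (by omega) hτ,
    Riter_apply_eq_sum_range_of_lt _ hg (mem_range.mp hs) hτ]
  push_cast
  ring
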